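/- Let J : ℝ → ℝ and define V(x) = J(x) + min(K + zQ - ΔJ(x), 0) where ΔJ(x) = J(x) - J(x + Q), K, z ≥ 0 and Q > 0. If ΔJ is non-increasing, then the function x ↦ K + zQ + V(x + Q) - V(x) equals max(0, K + zQ - ΔJ(x)) + min(0, K + zQ - ΔJ(x + Q)) and is non-decreasing in x. -/
import Mathlib


theorem stmt_4 (J : ℝ → ℝ) (K z Q : ℝ) (hK : 0 ≤ K) (hz : 0 ≤ z) (hQ : 0 < Q)
    (ΔJ : ℝ → ℝ) (hΔJ : ∀ x, ΔJ x = J x - J (x + Q))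
    (V : ℝ → ℝ) (hV : ∀ x, V x = J x + min (K + z * Q - ΔJ x) 0)
    (hmono : Antitone ΔJ) :
    (∀ x, K + z * Q + V (x + Q) - V x
        = max 0 (K + z * Q - ΔJ x) + min 0 (K + z * Q - ΔJ (x + Q))) ∧
      Monotone (fun x => K + z * Q + V (x + Q) - V x) := by
  have key : ∀ x, K + z * Q + V (x + Q) - V x
      = max 0 (K + z * Q - ΔJ x) + min 0 (K + z * Q - ΔJ (x + Q)) := by
    intro x
    have h1 := hΔJ x
    rw [hV, hV]
    rcases le_total (K + z * Q - ΔJ x) 0 with h | h <;>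
      rcases le_total (K + z * Q - ΔJ (x + Q)) 0 with h2 | h2
    · rw [min_eq_left h, min_eq_left h2, max_eq_left (by linarith),
        min_eq_right h2]; linarith
    · rw [min_eq_left h, min_eq_right h2, max_eq_left (by linarith),
        min_eq_left (by linarith)]; linarith
    · rw [min_eq_right h, min_eq_left h2, max_eq_right (by linarith),
        min_eq_right h2]; linarith
    · rw [min_eq_right h, min_eq_right h2, max_eq_right (by linarith),
        min_eq_left (by linarith)]; linarith
  refine ⟨key, ?_⟩
  have heq : (fun x => K + z * Q + V (x + Q) - V x)
      = fun x => max 0 (K + z * Q - ΔJ x) + min 0 (K + z * Q - ΔJ (x + Q)) :=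
    funext key
  rw [heq]
  intro a b hab
  have h1 : ΔJ b ≤ ΔJ a := hmono hab
  have h2 : ΔJ (b + Q) ≤ ΔJ (a + Q) := hmono (by linarith)
  exact add_le_add (max_le_max le_rfl (by linarith)) (min_le_min le_rfl (by linarith))
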